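/- Let A be a unital C*-algebra, let s ≥ 1 and n ≥ 1 be integers, and let u = (u_ij) be an n×n matrix over A satisfying the level-s cubic relations: u is unitary, the transpose u^t is unitary, each u_ij is normal, each p_ij = u_ij u_ij* is a projection, and u_ij^s = p_ij. Let l ≥ 1 and let j_1,…,j_l ≥ 1 be integers with s dividing j_1 + … + j_l. Then for all indices a_1,…,a_l ∈ {1,…,n}: Σ_{b=1}^n u_{a_1 b}^{j_1} u_{a_2 b}^{j_2} ⋯ u_{a_l b}^{j_l} equals 1 if a_1 = a_2 = … = a_l, and equals 0 otherwise. -/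

import Mathlib

/-!
For a fixed column `b` the range projections `p_ib = u_ib u_ib*` sum to `1` (unitarity of `uᵗ`),
hence are pairwise orthogonal. Every `u_ib` is a normal partial isometry, so
`u_ib = u_ib p_ib = p_ib u_ib`, and therefore `u_ib u_i'b = 0` for `i ≠ i'`. A product
`u_{a_1 b}^{j_1} ⋯ u_{a_l b}^{j_l}` thus vanishes unless all `a_r` agree, and then it is
`u_{ab}^{j_1 + ⋯ + j_l} = p_ab` because `s` divides the exponent. Summing over `b` gives
`Σ_b p_ab = 1` by unitarity of `u`.
-/

theorem IsStarProjection.mul_eq_zero_of_add_le_one {A : Type*} [CStarAlgebra A] [PartialOrder A]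
    [StarOrderedRing A] {p q : A} (hp : IsStarProjection p) (hq : IsStarProjection q)
    (h : p + q ≤ 1) : p * q = 0 := by
  have hle : q ≤ 1 - p := by rwa [le_sub_iff_add_le, add_comm]
  have hmul : (1 - p) * q = q := (hq.le_iff_mul_eq_right hp.one_sub).mp hle
  rwa [sub_mul, one_mul, sub_eq_self] at hmul

theorem IsStarProjection.mul_eq_zero_of_sum_eq_one {A : Type*} [CStarAlgebra A]
    [PartialOrder A] [StarOrderedRing A] {ι : Type*} [Fintype ι] {p : ι → A}
    (hp : ∀ i, IsStarProjection (p i)) (hsum : ∑ i, p i = 1) {i i' : ι} (h : i ≠ i') :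
    p i * p i' = 0 := by
  classical
  refine (hp i).mul_eq_zero_of_add_le_one (hp i') ?_
  calc p i + p i' = ∑ k ∈ {i, i'}, p k := (Finset.sum_pair h).symm
    _ ≤ ∑ k, p k :=
      Finset.sum_le_sum_of_subset_of_nonneg (Finset.subset_univ _) fun k _ _ => (hp k).nonneg
    _ = 1 := hsum

section PartialIsometry

variable {E : Type*} [NonUnitalNormedRing E] [StarRing E] [CStarRing E] {a : E}

theorem mul_star_mul_eq_self_of_isIdempotentElem (h : IsIdempotentElem (a * star a)) :
    a * star a * a = a := by
  set x := a * star a * a - a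
  have hx : x * star x = a * star a * (a * star a) * (a * star a) - a * star a * (a * star a)
      - a * star a * (a * star a) + a * star a := by
    simp only [x, star_sub, star_mul, star_star]
    noncomm_ring
  rw [h.eq, h.eq, sub_self, zero_sub, neg_add_cancel, CStarRing.mul_star_self_eq_zero_iff] at hx
  exact sub_eq_zero.mp hx

theorem mul_mul_star_eq_self_of_isIdempotentElem [IsStarNormal a]
    (h : IsIdempotentElem (a * star a)) : a * (a * star a) = a := by
  rw [← (star_comm_self' a), ← mul_assoc, mul_star_mul_eq_self_of_isIdempotentElem h]

theorem mul_eq_zero_of_isIdempotentElem_mul_star [IsStarNormal a] {b : E}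
    (ha : IsIdempotentElem (a * star a)) (hb : IsIdempotentElem (b * star b))
    (h : a * star a * (b * star b) = 0) : a * b = 0 :=
  calc a * b = a * (a * star a) * (b * star b * b) := by
        rw [mul_mul_star_eq_self_of_isIdempotentElem ha,
          mul_star_mul_eq_self_of_isIdempotentElem hb]
    _ = a * (a * star a * (b * star b)) * b := by simp only [mul_assoc]
    _ = 0 := by rw [h, mul_zero, zero_mul]

end PartialIsometry

theorem pow_mul_pow_eq_zero_of_mul_eq_zero {M : Type*} [MonoidWithZero M] {x y : M}
    (h : x * y = 0) {m n : ℕ} (hm : m ≠ 0) (hn : n ≠ 0) : x ^ m * y ^ n = 0 := by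
  obtain ⟨m, rfl⟩ := Nat.exists_eq_succ_of_ne_zero hm
  obtain ⟨n, rfl⟩ := Nat.exists_eq_succ_of_ne_zero hn
  rw [pow_succ, pow_succ', mul_assoc, ← mul_assoc x, h, zero_mul, mul_zero]

theorem List.prod_ofFn_pow_eq_ite {M ι : Type*} [MonoidWithZero M] [DecidableEq ι] {v : ι → M}
    (hv : ∀ i i', i ≠ i' → v i * v i' = 0) {l : ℕ} (a : Fin (l + 1) → ι)
    {j : Fin (l + 1) → ℕ} (hj : ∀ r, j r ≠ 0) :
    (List.ofFn fun r => v (a r) ^ j r).prod =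
      if ∀ r, a r = a 0 then v (a 0) ^ ∑ r, j r else 0 := by
  induction l with
  | zero => simp
  | succ l ih =>
    rw [List.ofFn_succ, List.prod_cons, ih (fun r => a r.succ) (fun r => hj r.succ)]
    split_ifs with htail hall hall
    · rw [hall (Fin.succ 0), ← pow_add, ← Fin.sum_univ_succ]
    · have hne : a 0 ≠ a 1 := fun h01 => hall (Fin.cases rfl fun r => (htail r).trans h01.symm)
      exact pow_mul_pow_eq_zero_of_mul_eq_zero (hv _ _ hne) (hj 0)
        fun h => hj 1 (Finset.sum_eq_zero_iff.mp h 0 (Finset.mem_univ _))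
    · exact absurd (fun r => (hall _).trans (hall _).symm) htail
    · rw [mul_zero]

theorem cubic_fixed_vector_computation_general {A : Type*} [CStarAlgebra A]
    (s n : ℕ) (u : Fin n → Fin n → A)
    (hU1 : ∀ i j, ∑ k, u i k * star (u j k) = if i = j then 1 else 0)
    (hT1 : ∀ i j, ∑ k, u k i * star (u k j) = if i = j then 1 else 0)
    (hnormal : ∀ i j, u i j * star (u i j) = star (u i j) * u i j)
    (hproj : ∀ i j, star (u i j * star (u i j)) = u i j * star (u i j) ∧
      (u i j * star (u i j)) * (u i j * star (u i j)) = u i j * star (u i j))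
    (hpow : ∀ i j, u i j ^ s = u i j * star (u i j))
    (l : ℕ) (hl : 1 ≤ l) (j : Fin l → ℕ) (hj : ∀ r, 1 ≤ j r)
    (hdiv : s ∣ ∑ r, j r) (a : Fin l → Fin n) :
    ∑ b : Fin n, (List.ofFn fun r : Fin l => u (a r) b ^ j r).prod =
      if ∀ r r' : Fin l, a r = a r' then 1 else 0 := by
  let _ := CStarAlgebra.spectralOrder A
  let _ := CStarAlgebra.spectralOrderedRing A
  obtain ⟨l, rfl⟩ : ∃ k, l = k + 1 := ⟨l - 1, by omega⟩
  have hP (i b) : IsStarProjection (u i b * star (u i b)) := ⟨(hproj i b).2, (hproj i b).1⟩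
  have horth (b) (i i' : Fin n) (h : i ≠ i') : u i b * u i' b = 0 := by
    have : IsStarNormal (u i b) := ⟨(hnormal i b).symm⟩
    exact mul_eq_zero_of_isIdempotentElem_mul_star (hP i b).isIdempotentElem
      (hP i' b).isIdempotentElem
      (IsStarProjection.mul_eq_zero_of_sum_eq_one (hP · b) (by simpa using hT1 b b) h)
  have hsum_ne : ∑ r, j r ≠ 0 := (Finset.sum_pos (fun r _ => hj r) Finset.univ_nonempty).ne'
  have hpow_sum (i b) : u i b ^ ∑ r, j r = u i b * star (u i b) := by
    obtain ⟨m, hm⟩ := hdiv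
    rw [hm, pow_mul, hpow, (hP i b).pow_eq (by rintro rfl; exact hsum_ne hm)]
  have hall : (∀ r r', a r = a r') ↔ ∀ r, a r = a 0 :=
    ⟨fun h r => h r 0, fun h r r' => (h r).trans (h r').symm⟩
  simp_rw [List.prod_ofFn_pow_eq_ite (horth _) a (fun r => Nat.one_le_iff_ne_zero.mp (hj r)), hall]
  split_ifs
  · simpa [hpow_sum] using hU1 (a 0) (a 0)
  · simp

/-- for a matrix `u` over a unital C*-algebra satisfying the level-`s`
cubic relations, and exponents `j_1, …, j_l ≥ 1` whose sum is divisible by `s`,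
the sum `Σ_b u_{a_1 b}^{j_1} ⋯ u_{a_l b}^{j_l}` equals `1` if `a_1 = ⋯ = a_l`
and `0` otherwise. -/
theorem cubic_fixed_vector_computation {A : Type*} [CStarAlgebra A]
    (s n : ℕ) (hs : 1 ≤ s) (hn : 1 ≤ n) (u : Fin n → Fin n → A)
    (hU1 : ∀ i j, ∑ k, u i k * star (u j k) = if i = j then 1 else 0)
    (hU2 : ∀ i j, ∑ k, star (u k i) * u k j = if i = j then 1 else 0)
    (hT1 : ∀ i j, ∑ k, u k i * star (u k j) = if i = j then 1 else 0)
    (hT2 : ∀ i j, ∑ k, star (u i k) * u j k = if i = j then 1 else 0)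
    (hnormal : ∀ i j, u i j * star (u i j) = star (u i j) * u i j)
    (hproj : ∀ i j, star (u i j * star (u i j)) = u i j * star (u i j) ∧
      (u i j * star (u i j)) * (u i j * star (u i j)) = u i j * star (u i j))
    (hpow : ∀ i j, u i j ^ s = u i j * star (u i j))
    (l : ℕ) (hl : 1 ≤ l) (j : Fin l → ℕ) (hj : ∀ r, 1 ≤ j r)
    (hdiv : s ∣ ∑ r, j r) (a : Fin l → Fin n) :
    ∑ b : Fin n, (List.ofFn fun r : Fin l => u (a r) b ^ j r).prod =
      if ∀ r r' : Fin l, a r = a r' then 1 else 0 :=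
  cubic_fixed_vector_computation_general s n u hU1 hT1 hnormal hproj hpow l hl j hj hdiv a
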